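/- Let k ≥ 2 be a fixed integer. There is a constant C depending only on k such that for all x ≥ 2, the sum of D_{k-1}(n) over 2-full integers n ≤ x is at most C·x^{1/2}·(log x)^{k-2}. -/

import Mathlib

/-!
Write a 2-full `n` as `a² c³ d⁴` with `c, d` squarefree: a prime with exponent `2` goes into `a`,
one with odd exponent `e ≥ 3` puts `p` into `c` and `p ^ ((e - 3) / 2)` into `a`, one with even
exponent `e ≥ 4` puts `p` into `d` and `p ^ ((e - 4) / 2)` into `a`. With `j = k - 1` and `p ^ α`
the part of `p ^ e` sent to `a`, one has `d_j(p²) / j ≤ d_j(p)` and, for `e ≥ 3`,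
`d_j(p^e) / j ≤ 5^(j-1) d_j(p^α)`; hence `D_j(n) ≤ 5^((j-1)(ω(c)+ω(d))) d_j(a)`. Summing over
`a ≤ √(x / (c³ d⁴))` with `∑_{a ≤ y} d_j(a) ≤ y (1 + log y)^(j-1)` and using `d⁴ ≥ d³` leaves
`√x (1 + log x)^(k-2)` times the square of `∑_c 5^((k-2) ω(c)) c^(-3/2)`. Recording `c` and `d` by
their sets of prime factors makes this a sum over sets of primes, i.e. the product
`∏_p (1 + 5^(k-2) p^(-3/2)) ≤ exp (5^(k-2) ζ(3/2))`.
-/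

open Finset ArithmeticFunction Filter Asymptotics

/-- The Piltz divisor function `d_k(n)`: the number of ways of writing `n`
as an ordered product of `k` positive integers (the `k`-fold Dirichlet
convolution of the constant-one function). -/
noncomputable def piltz (k n : ℕ) : ℕ := (ArithmeticFunction.zeta ^ k : ArithmeticFunction ℕ) n

/-- `D_k(n) = d_k(n) / k^{ω(n)}`. -/
noncomputable def Dk (k n : ℕ) : ℝ := (piltz k n : ℝ) / (k : ℝ) ^ n.primeFactors.card

/-- `n` is 2-full: every prime dividing `n` divides it at least twice. -/
def TwoFull (n : ℕ) : Prop := ∀ p ∈ n.primeFactors, p ^ 2 ∣ n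

instance : DecidablePred TwoFull := fun n =>
  inferInstanceAs (Decidable (∀ p ∈ n.primeFactors, p ^ 2 ∣ n))

/-- The characteristic function of 2-full integers. -/
noncomputable def s2 (n : ℕ) : ℝ := if TwoFull n then 1 else 0

/-- `g_k(n) = ((k-1)/k) · s₂(n) · D_{k-1}(n)`. -/
noncomputable def gk (k n : ℕ) : ℝ := ((k : ℝ) - 1) / k * s2 n * Dk (k - 1) n

/-- The Euler product constant `A_k`. -/
noncomputable def Ak (k : ℕ) : ℝ :=
  ∏' p : Nat.Primes,
    (1 - 1 / ((p : ℕ) : ℝ)) * (1 - 1 / k + (1 / k : ℝ) * ((1 - 1 / ((p : ℕ) : ℝ)) ^ k)⁻¹)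

/-- `G_k(q) = A_k · ∏_{p ∣ q} k / (k - 1 + (1 - 1/p)^{-k})`. -/
noncomputable def Gk (k q : ℕ) : ℝ :=
  Ak k * ∏ p ∈ q.primeFactors, (k : ℝ) / ((k : ℝ) - 1 + ((1 - 1 / (p : ℝ)) ^ k)⁻¹)

lemma piltz_succ (j n : ℕ) : piltz (j + 1) n = ∑ d ∈ n.divisors, piltz j d := by
  rw [piltz, pow_succ, ← natCoe_nat zeta, coe_mul_zeta_apply]
  rfl

lemma piltz_prime_pow {p : ℕ} (hp : p.Prime) (j e : ℕ) :
    piltz (j + 1) (p ^ e) = (e + j).choose j := by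
  induction j generalizing e with
  | zero => simp [piltz, hp.ne_zero]
  | succ j ih =>
    rw [piltz_succ, Nat.sum_divisors_prime_pow hp]
    simp only [ih]
    rw [Nat.sum_range_add_choose, add_assoc]

lemma Real.log_natCast_monotone : Monotone fun n : ℕ => Real.log n := by
  intro a b hab
  rcases a.eq_zero_or_pos with rfl | ha
  · simpa using Real.log_natCast_nonneg b
  · exact Real.log_le_log (by exact_mod_cast ha) (by exact_mod_cast hab)

lemma sum_Ioc_piltz_le (j M : ℕ) :
    ∑ n ∈ Ioc 0 M, (piltz (j + 1) n : ℝ) ≤ M * (1 + Real.log M) ^ j := by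
  induction j generalizing M with
  | zero =>
    norm_cast
    simp only [piltz, zero_add, pow_one, sum_Ioc_zeta, pow_zero, mul_one, le_refl]
  | succ j ih =>
    calc ∑ n ∈ Ioc 0 M, (piltz (j + 2) n : ℝ)
        = ∑ n ∈ Ioc 0 M, ∑ m ∈ Ioc 0 (M / n), (piltz (j + 1) m : ℝ) := by
          have h := sum_Ioc_mul_eq_sum_sum (zeta : ArithmeticFunction ℕ) (zeta ^ (j + 1)) M
          rw [← pow_succ'] at h
          simp only [piltz]
          rw_mod_cast [h]
          refine sum_congr rfl fun n hn => ?_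
          rw [zeta_apply_ne (mem_Ioc.1 hn).1.ne', one_mul]
      _ ≤ ∑ n ∈ Ioc 0 M, (M / n : ℝ) * (1 + Real.log M) ^ j := by
          refine sum_le_sum fun n hn => (ih (M / n)).trans ?_
          have := Real.log_natCast_monotone (Nat.div_le_self M n)
          gcongr
          exact Nat.cast_div_le
      _ = M * (1 + Real.log M) ^ j * harmonic M := by
          rw [harmonic_eq_sum_Icc, show Icc 1 M = Ioc 0 M from Icc_add_one_left_eq_Ioc 0 M,
            Rat.cast_sum, mul_sum]
          refine sum_congr rfl fun n hn => ?_
          push_cast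
          ring
      _ ≤ M * (1 + Real.log M) ^ (j + 1) := by
          rw [pow_succ, ← mul_assoc]
          gcongr
          exact harmonic_le_one_add_log M

def extraExp (e : ℕ) : ℕ := if e % 2 = 1 then 3 else if 4 ≤ e then 4 else 0

def halfExp (e : ℕ) : ℕ := (e - extraExp e) / 2

lemma extraExp_cases (e : ℕ) : extraExp e = 0 ∨ extraExp e = 3 ∨ extraExp e = 4 := by
  unfold extraExp; split_ifs <;> simp

lemma two_mul_halfExp_add_extraExp {e : ℕ} (he : 2 ≤ e) : 2 * halfExp e + extraExp e = e := by
  unfold halfExp extraExp; split_ifs <;> omega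

lemma extraExp_eq_zero_iff {e : ℕ} (he : 2 ≤ e) : extraExp e = 0 ↔ e = 2 := by
  unfold extraExp; split_ifs <;> simp <;> omega

lemma choose_two_mul_add_four_add_le (a m : ℕ) :
    (2 * a + 4 + m).choose m ≤ 5 ^ m * (a + m).choose m := by
  have h : (2 * a + 4 + m).descFactorial m ≤ 5 ^ m * (a + m).descFactorial m := by
    rw [Nat.descFactorial_eq_prod_range, Nat.descFactorial_eq_prod_range,
      show 5 ^ m = ∏ _i ∈ range m, 5 by simp, ← prod_mul_distrib]
    exact prod_le_prod' fun i hi => by rw [mem_range] at hi; omega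
  rw [Nat.descFactorial_eq_factorial_mul_choose, Nat.descFactorial_eq_factorial_mul_choose,
    mul_left_comm] at h
  exact Nat.le_of_mul_le_mul_left h (Nat.factorial_pos m)

lemma piltz_prime_pow_le {p e : ℕ} (hp : p.Prime) (he : 2 ≤ e) (m : ℕ) :
    piltz (m + 1) (p ^ e) ≤
      (m + 1) * (if extraExp e = 0 then 1 else 5 ^ m) * piltz (m + 1) (p ^ halfExp e) := by
  rw [piltz_prime_pow hp, piltz_prime_pow hp]
  have hsplit := two_mul_halfExp_add_extraExp he
  split_ifs with h0
  · obtain rfl := (extraExp_eq_zero_iff he).1 h0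
    have : halfExp 2 = 1 := by decide
    rw [this, mul_one, add_comm 1, Nat.choose_succ_self_right, add_comm 2, Nat.choose_symm_add,
      Nat.choose_two_right]
    exact Nat.div_le_of_le_mul (by rw [show m + 2 - 1 = m + 1 from rfl]; nlinarith)
  · calc (e + m).choose m ≤ (2 * halfExp e + 4 + m).choose m := by
          have := extraExp_cases e
          exact Nat.choose_le_choose m (by omega)
      _ ≤ 5 ^ m * (halfExp e + m).choose m := choose_two_mul_add_four_add_le _ m
      _ ≤ (m + 1) * 5 ^ m * (halfExp e + m).choose m := by
          rw [mul_assoc]; exact Nat.le_mul_of_pos_left _ m.succ_pos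

section Decomposition

variable (n : ℕ)

def cubeSet : Finset ℕ := n.primeFactors.filter fun p => extraExp (n.factorization p) = 3

def fourthSet : Finset ℕ := n.primeFactors.filter fun p => extraExp (n.factorization p) = 4

def sqrtPart : ℕ := ∏ p ∈ n.primeFactors, p ^ halfExp (n.factorization p)

variable {n}

lemma TwoFull.two_le_factorization (hn : n ≠ 0) (h : TwoFull n) {p : ℕ}
    (hp : p ∈ n.primeFactors) : 2 ≤ n.factorization p :=
  ((Nat.prime_of_mem_primeFactors hp).pow_dvd_iff_le_factorization hn).1 (h p hp)

lemma TwoFull.sqrtPart_sq_mul (hn : n ≠ 0) (h : TwoFull n) :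
    sqrtPart n ^ 2 * ((∏ p ∈ cubeSet n, p) ^ 3 * (∏ p ∈ fourthSet n, p) ^ 4) = n := by
  conv_rhs => rw [← Nat.prod_factorization_pow_eq_self hn]
  rw [Finsupp.prod, Nat.support_factorization, sqrtPart, cubeSet, fourthSet, ← prod_pow,
    ← prod_pow, ← prod_pow, prod_filter, prod_filter, ← prod_mul_distrib, ← prod_mul_distrib]
  refine prod_congr rfl fun p hp => ?_
  have hexp := two_mul_halfExp_add_extraExp (h.two_le_factorization hn hp)
  rcases extraExp_cases (n.factorization p) with h | h | h
  all_goals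
    norm_num [h, ← pow_mul, ← pow_add]
    congr 1
    omega

lemma piltz_eq_prod_primeFactors (j : ℕ) (hn : n ≠ 0) :
    piltz j n = ∏ p ∈ n.primeFactors, piltz j (p ^ n.factorization p) := by
  rw [piltz, (isMultiplicative_zeta.pow (k := j)).multiplicative_factorization _ hn, Finsupp.prod,
    Nat.support_factorization]
  rfl

lemma piltz_sqrtPart (j : ℕ) :
    piltz j (sqrtPart n) = ∏ p ∈ n.primeFactors, piltz j (p ^ halfExp (n.factorization p)) :=
  (isMultiplicative_zeta.pow (k := j)).map_prod _ _ fun _ hp _ hq hpq =>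
    Nat.Coprime.pow _ _ <| (Nat.coprime_primes (Nat.prime_of_mem_primeFactors hp)
      (Nat.prime_of_mem_primeFactors hq)).2 hpq

end Decomposition

lemma pow_card_cubeSet_mul_pow_card_fourthSet (n : ℕ) (b : ℝ) :
    b ^ #(cubeSet n) * b ^ #(fourthSet n) =
      ∏ p ∈ n.primeFactors, if extraExp (n.factorization p) = 0 then 1 else b := by
  rw [← prod_const, ← prod_const, cubeSet, fourthSet, prod_filter, prod_filter,
    ← prod_mul_distrib]
  refine prod_congr rfl fun p _ => ?_
  rcases extraExp_cases (n.factorization p) with h | h | h <;> simp [h]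

lemma TwoFull.Dk_succ_le {n : ℕ} (hn : n ≠ 0) (h : TwoFull n) (m : ℕ) :
    Dk (m + 1) n ≤
      (5 ^ m : ℝ) ^ #(cubeSet n) * (5 ^ m : ℝ) ^ #(fourthSet n) * piltz (m + 1) (sqrtPart n) := by
  rw [Dk, piltz_eq_prod_primeFactors _ hn, piltz_sqrtPart, pow_card_cubeSet_mul_pow_card_fourthSet,
    Nat.cast_prod, Nat.cast_prod, ← prod_const, ← prod_div_distrib, ← prod_mul_distrib]
  refine prod_le_prod (fun _ _ => by positivity) fun p hp => ?_
  rw [div_le_iff₀ (by positivity)]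
  have := piltz_prime_pow_le (Nat.prime_of_mem_primeFactors hp) (h.two_le_factorization hn hp) m
  calc (piltz (m + 1) (p ^ n.factorization p) : ℝ)
      ≤ ((m + 1) * (if extraExp (n.factorization p) = 0 then 1 else 5 ^ m) *
          piltz (m + 1) (p ^ halfExp (n.factorization p)) : ℕ) := by exact_mod_cast this
    _ = _ := by push_cast; split_ifs <;> ring

lemma TwoFull.sqrtPart_mem_Icc {n N : ℕ} (hn : n ∈ Icc 1 N) (h : TwoFull n) :
    sqrtPart n ∈ Icc 1 N := by
  have hn0 : n ≠ 0 := by rw [mem_Icc] at hn; omega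
  have hdvd : sqrtPart n ∣ n :=
    (dvd_pow_self _ two_ne_zero).trans (Dvd.intro _ (h.sqrtPart_sq_mul hn0))
  have hpos : 0 < sqrtPart n := Nat.pos_of_dvd_of_pos hdvd (Nat.pos_of_ne_zero hn0)
  exact mem_Icc.2 ⟨hpos, (Nat.le_of_dvd (Nat.pos_of_ne_zero hn0) hdvd).trans (mem_Icc.1 hn).2⟩

lemma filter_primeFactors_subset_primesBelow {n N : ℕ} (hn : n ∈ Icc 1 N) (q : ℕ → Prop)
    [DecidablePred q] :
    n.primeFactors.filter q ⊆ Nat.primesBelow (N + 1) := fun p hp => by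
  have hp' := mem_of_mem_filter p hp
  refine Nat.mem_primesBelow.2 ⟨Nat.lt_succ_of_le ?_, Nat.prime_of_mem_primeFactors hp'⟩
  exact (Nat.le_of_mem_primeFactors hp').trans (mem_Icc.1 hn).2

lemma sum_twoFull_Dk_le_sum_powerset (m N : ℕ) :
    ∑ n ∈ (Icc 1 N).filter TwoFull, Dk (m + 1) n ≤
      ∑ C ∈ (Nat.primesBelow (N + 1)).powerset, ∑ D ∈ (Nat.primesBelow (N + 1)).powerset,
        (5 ^ m : ℝ) ^ #C * (5 ^ m : ℝ) ^ #D *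
          ∑ a ∈ (Icc 1 N).filter (fun a => a ^ 2 * ((∏ p ∈ C, p) ^ 3 * (∏ p ∈ D, p) ^ 4) ≤ N),
            (piltz (m + 1) a : ℝ) := by
  set P := (Nat.primesBelow (N + 1)).powerset
  set F : (Finset ℕ × Finset ℕ) × ℕ → ℝ := fun q =>
    (5 ^ m : ℝ) ^ #q.1.1 * (5 ^ m : ℝ) ^ #q.1.2 * piltz (m + 1) q.2
  set T := ((P ×ˢ P) ×ˢ Icc 1 N).filter
    fun q => q.2 ^ 2 * ((∏ p ∈ q.1.1, p) ^ 3 * (∏ p ∈ q.1.2, p) ^ 4) ≤ N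
  set φ : ℕ → (Finset ℕ × Finset ℕ) × ℕ := fun n => ((cubeSet n, fourthSet n), sqrtPart n)
  have hφ : ∀ n ∈ (Icc 1 N).filter TwoFull,
      φ n ∈ T ∧ (φ n).2 ^ 2 * ((∏ p ∈ (φ n).1.1, p) ^ 3 * (∏ p ∈ (φ n).1.2, p) ^ 4) = n := by
    intro n hn
    rw [mem_filter] at hn
    have hmul := hn.2.sqrtPart_sq_mul (by rw [mem_Icc] at hn; omega)
    refine ⟨mem_filter.2 ⟨?_, ?_⟩, hmul⟩
    · have hsub := filter_primeFactors_subset_primesBelow hn.1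
      exact mem_product.2 ⟨mem_product.2 ⟨mem_powerset.2 (hsub _), mem_powerset.2 (hsub _)⟩,
        hn.2.sqrtPart_mem_Icc hn.1⟩
    · exact hmul.le.trans (mem_Icc.1 hn.1).2
  calc ∑ n ∈ (Icc 1 N).filter TwoFull, Dk (m + 1) n
      ≤ ∑ n ∈ (Icc 1 N).filter TwoFull, F (φ n) := by
        refine sum_le_sum fun n hn => ?_
        rw [mem_filter, mem_Icc] at hn
        exact hn.2.Dk_succ_le (by omega) m
    _ = ∑ q ∈ ((Icc 1 N).filter TwoFull).image φ, F q := by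
        refine (sum_image fun n hn n' hn' he => ?_).symm
        rw [← (hφ n hn).2, ← (hφ n' hn').2, he]
    _ ≤ ∑ q ∈ T, F q := by
        refine sum_le_sum_of_subset_of_nonneg ?_ fun q _ _ => by positivity
        intro q hq
        obtain ⟨n, hn, rfl⟩ := mem_image.1 hq
        exact (hφ n hn).1
    _ = _ := by
        simp only [T, F, sum_filter, sum_product, mul_sum, mul_ite, mul_zero]

lemma sum_piltz_filter_sq_mul_le (m N r : ℕ) (hr : 0 < r) :
    ∑ a ∈ (Icc 1 N).filter (fun a => a ^ 2 * r ≤ N), (piltz (m + 1) a : ℝ) ≤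
      √(N / r) * (1 + Real.log N) ^ m := by
  set M := Nat.sqrt (N / r)
  have hsub : (Icc 1 N).filter (fun a => a ^ 2 * r ≤ N) ⊆ Ioc 0 M := fun a ha => by
    rw [mem_filter, mem_Icc] at ha
    rw [mem_Ioc, Nat.le_sqrt, Nat.le_div_iff_mul_le hr, ← sq]
    exact ⟨ha.1.1, ha.2⟩
  have hM : (M : ℝ) ≤ √(N / r) := by
    refine Real.le_sqrt_of_sq_le ((le_trans ?_ Nat.cast_div_le))
    exact_mod_cast Nat.sqrt_le' (N / r)
  calc ∑ a ∈ (Icc 1 N).filter (fun a => a ^ 2 * r ≤ N), (piltz (m + 1) a : ℝ)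
      ≤ ∑ a ∈ Ioc 0 M, (piltz (m + 1) a : ℝ) :=
        sum_le_sum_of_subset_of_nonneg hsub fun _ _ _ => by positivity
    _ ≤ M * (1 + Real.log M) ^ m := sum_Ioc_piltz_le m M
    _ ≤ √(N / r) * (1 + Real.log N) ^ m := by
        have := Real.log_natCast_monotone ((Nat.sqrt_le_self _).trans (Nat.div_le_self N r))
        gcongr

lemma sqrt_div_cube_mul_fourth_le {y : ℝ} (hy : 0 ≤ y) {c d : ℕ} (hc : 0 < c) (hd : 0 < d) :
    √(y / ((c ^ 3 * d ^ 4 : ℕ) : ℝ)) ≤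
      √y * ((c : ℝ) ^ (3 / 2 : ℝ))⁻¹ * ((d : ℝ) ^ (3 / 2 : ℝ))⁻¹ := by
  have hc' : (0 : ℝ) < c := by exact_mod_cast hc
  have hd' : (0 : ℝ) < d := by exact_mod_cast hd
  have hsqrt : ∀ t : ℝ, 0 < t → √(t ^ 3) = t ^ (3 / 2 : ℝ) := fun t ht => by
    rw [Real.sqrt_eq_rpow, ← Real.rpow_natCast, ← Real.rpow_mul ht.le]
    norm_num
  calc √(y / ((c ^ 3 * d ^ 4 : ℕ) : ℝ)) ≤ √(y / ((c : ℝ) ^ 3 * (d : ℝ) ^ 3)) := by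
        gcongr
        push_cast
        gcongr
        · exact_mod_cast hd
        · norm_num
    _ = _ := by
        rw [Real.sqrt_div' _ (by positivity), Real.sqrt_mul (by positivity), hsqrt _ hc',
          hsqrt _ hd']
        field_simp

lemma sum_powerset_pow_card_mul_prod_rpow_inv_le (P : Finset ℕ) {b : ℝ} (hb : 0 ≤ b) {s : ℝ}
    (hs : 1 < s) :
    ∑ C ∈ P.powerset, b ^ #C * (((∏ p ∈ C, p : ℕ) : ℝ) ^ s)⁻¹ ≤
      Real.exp (b * ∑' n : ℕ, ((n : ℝ) ^ s)⁻¹) := by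
  have hterm : ∀ C ∈ P.powerset, b ^ #C * (((∏ p ∈ C, p : ℕ) : ℝ) ^ s)⁻¹ =
      ∏ p ∈ C, b * ((p : ℝ) ^ s)⁻¹ := fun C _ => by
    rw [prod_mul_distrib, prod_const, Nat.cast_prod,
      ← Real.finsetProd_rpow _ _ fun _ _ => by positivity, prod_inv_distrib]
  have hnonneg : ∀ n : ℕ, 0 ≤ b * ((n : ℝ) ^ s)⁻¹ := fun n => by positivity
  rw [sum_congr rfl hterm, ← prod_one_add]
  refine (Real.prod_one_add_le_exp_sum P hnonneg).trans (Real.exp_le_exp.2 ?_)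
  rw [← mul_sum]
  exact mul_le_mul_of_nonneg_left ((Real.summable_nat_rpow_inv.2 hs).sum_le_tsum P
    fun n _ => by positivity) hb

lemma sum_piltz_filter_cube_mul_fourth_le (m : ℕ) {x : ℝ} (hx : 1 ≤ x) {c d : ℕ} (hc : 0 < c)
    (hd : 0 < d) :
    ∑ a ∈ (Icc 1 ⌊x⌋₊).filter (fun a => a ^ 2 * (c ^ 3 * d ^ 4) ≤ ⌊x⌋₊), (piltz (m + 1) a : ℝ) ≤
      √x * ((c : ℝ) ^ (3 / 2 : ℝ))⁻¹ * ((d : ℝ) ^ (3 / 2 : ℝ))⁻¹ * (1 + Real.log x) ^ m := by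
  have hN : (⌊x⌋₊ : ℝ) ≤ x := Nat.floor_le (by linarith)
  have hlog : Real.log ⌊x⌋₊ ≤ Real.log x :=
    Real.log_le_log (Nat.cast_pos.2 (Nat.floor_pos.2 hx)) hN
  refine (sum_piltz_filter_sq_mul_le m _ _ (by positivity)).trans ?_
  calc √(⌊x⌋₊ / ((c ^ 3 * d ^ 4 : ℕ) : ℝ)) * (1 + Real.log ⌊x⌋₊) ^ m
      ≤ √⌊x⌋₊ * ((c : ℝ) ^ (3 / 2 : ℝ))⁻¹ * ((d : ℝ) ^ (3 / 2 : ℝ))⁻¹ * (1 + Real.log x) ^ m := by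
        gcongr
        exact sqrt_div_cube_mul_fourth_le (Nat.cast_nonneg _) hc hd
    _ ≤ _ := by
        gcongr
        exact pow_nonneg (by linarith [Real.log_nonneg hx]) m

lemma sum_twoFull_Dk_le_sqrt_mul (m : ℕ) {x : ℝ} (hx : 1 ≤ x) :
    ∑ n ∈ (Icc 1 ⌊x⌋₊).filter TwoFull, Dk (m + 1) n ≤
      √x * (1 + Real.log x) ^ m * (∑ C ∈ (Nat.primesBelow (⌊x⌋₊ + 1)).powerset,
        (5 ^ m : ℝ) ^ #C * (((∏ p ∈ C, p : ℕ) : ℝ) ^ (3 / 2 : ℝ))⁻¹) ^ 2 := by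
  set P := (Nat.primesBelow (⌊x⌋₊ + 1)).powerset
  have hprod : ∀ C ∈ P, 0 < ∏ p ∈ C, p := fun C hC =>
    prod_pos fun p hp => (Nat.prime_of_mem_primesBelow (mem_powerset.1 hC hp)).pos
  refine (sum_twoFull_Dk_le_sum_powerset m ⌊x⌋₊).trans ?_
  rw [sq, sum_mul_sum, mul_sum]
  refine sum_le_sum fun C hC => ?_
  rw [mul_sum]
  refine sum_le_sum fun D hD => ?_
  refine (mul_le_mul_of_nonneg_left (sum_piltz_filter_cube_mul_fourth_le m hx (hprod C hC)
    (hprod D hD)) (by positivity)).trans_eq ?_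
  ring

lemma one_add_log_le_three_mul_log {x : ℝ} (hx : 2 ≤ x) : 1 + Real.log x ≤ 3 * Real.log x := by
  have := Real.log_le_log two_pos hx
  linarith [Real.log_two_gt_d9]

/-- For `k ≥ 2` there is `C` depending only on `k` such that for all `x ≥ 2`,
the sum of `D_{k-1}(n)` over 2-full `n ≤ x` is at most `C·x^{1/2}·(log x)^{k-2}`. -/
theorem stmt_7 (k : ℕ) (hk : 2 ≤ k) :
    ∃ C : ℝ, 0 < C ∧ ∀ x : ℝ, 2 ≤ x →
      ∑ n ∈ (Icc 1 ⌊x⌋₊).filter TwoFull, Dk (k - 1) n ≤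
        C * x ^ (1 / 2 : ℝ) * Real.log x ^ (k - 2) := by
  obtain ⟨m, rfl⟩ : ∃ m, k = m + 2 := ⟨k - 2, by omega⟩
  set E := Real.exp ((5 : ℝ) ^ m * ∑' n : ℕ, ((n : ℝ) ^ (3 / 2 : ℝ))⁻¹)
  refine ⟨E ^ 2 * 3 ^ m, by positivity, fun x hx => ?_⟩
  have hlog := one_add_log_le_three_mul_log hx
  have hE := sum_powerset_pow_card_mul_prod_rpow_inv_le (Nat.primesBelow (⌊x⌋₊ + 1))
    (b := 5 ^ m) (s := 3 / 2) (by positivity) (by norm_num)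
  calc ∑ n ∈ (Icc 1 ⌊x⌋₊).filter TwoFull, Dk (m + 1) n
      ≤ √x * (1 + Real.log x) ^ m * (∑ C ∈ (Nat.primesBelow (⌊x⌋₊ + 1)).powerset,
          (5 ^ m : ℝ) ^ #C * (((∏ p ∈ C, p : ℕ) : ℝ) ^ (3 / 2 : ℝ))⁻¹) ^ 2 :=
        sum_twoFull_Dk_le_sqrt_mul m (by linarith)
    _ ≤ √x * (3 * Real.log x) ^ m * E ^ 2 := by
        have := Real.log_nonneg (by linarith : (1 : ℝ) ≤ x)
        gcongr
    _ = E ^ 2 * 3 ^ m * x ^ (1 / 2 : ℝ) * Real.log x ^ (m + 2 - 2) := by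
        rw [Real.sqrt_eq_rpow, mul_pow, show m + 2 - 2 = m from rfl]
        ring
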